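/- arXiv:1609.04291 — 2 statements merged into one kernel-verified Lean document; each statement's English description precedes it below -/
import Mathlib

section
/- Suppose α ∈ (0,π), α ≠ π/2, and real-valued functions λ, and derivations e₁, e₂ satisfy the Codazzi equation e₁(λ) + λ² cot α + κ cos α sin α + 4τ² cot α cos²α = 0 and the biconservativity system λ e₁(λ) − 2τ e₂(λ) − 2λ(4τ² − κ) cos α sin α = 0, 3λ e₂(λ) = 2τ e₁(λ). Then λ satisfies the polynomial equation with constant coefficients: 6 cot α · λ⁴ + [3 sin 2α (8τ² − κ) + 8τ² cot α (3cos²α − 1)] λ² − 8τ² cos α (κ sin α + 4τ² cot α cos α) = 0. -/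
open Real

/-- For a constant angle `α ∈ (0,π)`, `α ≠ π/2`, the Codazzi equation together with the
biconservativity system implies the quartic polynomial equation with constant
coefficients for `λ`. -/
theorem stmt4 (κ τ α lam e1lam e2lam : ℝ)
    (hα : α ∈ Set.Ioo 0 Real.pi) (hα2 : α ≠ Real.pi / 2)
    (hcod : e1lam + lam ^ 2 * (cos α / sin α) + κ * cos α * sin α
      + 4 * τ ^ 2 * (cos α / sin α) * cos α ^ 2 = 0)
    (hbc1 : lam * e1lam - 2 * τ * e2lam
      - 2 * lam * (4 * τ ^ 2 - κ) * cos α * sin α = 0)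
    (hbc2 : 3 * lam * e2lam = 2 * τ * e1lam) :
    6 * (cos α / sin α) * lam ^ 4
      + (3 * sin (2 * α) * (8 * τ ^ 2 - κ)
          + 8 * τ ^ 2 * (cos α / sin α) * (3 * cos α ^ 2 - 1)) * lam ^ 2
      - 8 * τ ^ 2 * cos α * (κ * sin α + 4 * τ ^ 2 * (cos α / sin α) * cos α) = 0 := by
  rw [sin_two_mul]
  linear_combination (6*lam^2 - 8*τ^2)*hcod - 6*lam*hbc1 - 4*τ*hbc2
end

section
/- If λ is a smooth real-valued function on a connected surface satisfying λ e₁(λ) = 2τ e₂(λ) and 3λ e₂(λ) = 2τ e₁(λ) with τ ≠ 0, then λ is constant. More precisely, substituting gives 3λ² e₂(λ) = 4τ² e₂(λ), so (3λ² − 4τ²) e₂(λ) = 0 and similarly (3λ² − 4τ²) e₁(λ) = 0 up to scaling; at any point where grad λ ≠ 0 one deduces 3λ² = 4τ² and λ² = 4τ²·(e₂λ/e₁λ)² simultaneously leading to grad λ = 0, a contradiction; hence grad λ ≡ 0. -/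
/-!
Combining the two relations gives `(3λ² - 4τ²) dλ = 0` on the whole frame, hence everywhere.
This is the differential of `λ³ - 4τ²λ`, which is therefore constant on the connected domain.
So `λ` is a continuous function with values in the finite zero set of a cubic, hence constant.
-/

open Polynomial

theorem IsPreconnected.eq_of_eval_comp_eq {X 𝕜 : Type*} [TopologicalSpace X] [Field 𝕜]
    [TopologicalSpace 𝕜] [T1Space 𝕜] {S : Set X} (hS : IsPreconnected S) {f : X → 𝕜}
    (hf : ContinuousOn f S) {p : 𝕜[X]} (hp : 0 < p.natDegree) {k : 𝕜}
    (hpf : ∀ x ∈ S, p.eval (f x) = k) {x y : X} (hx : x ∈ S) (hy : y ∈ S) : f x = f y := by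
  have hfin : {s | p.eval s = k}.Finite := by
    by_contra hinf
    have := p.eq_of_infinite_eval_eq (C k) (by simpa using hinf)
    simp [this] at hp
  exact hS.constant_of_mapsTo hfin.isDiscrete hf hpf hx hy

theorem ContinuousLinearMap.smul_eq_zero_of_frame_relations {E : Type*} [AddCommGroup E]
    [Module ℝ E] [TopologicalSpace E] {L : E →L[ℝ] ℝ} {u v : E}
    (huv : Submodule.span ℝ {u, v} = ⊤) {a τ : ℝ} (h₁ : a * L u = 2 * τ * L v)
    (h₂ : 3 * a * L v = 2 * τ * L u) : (3 * a ^ 2 - 4 * τ ^ 2) • L = 0 := by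
  refine ContinuousLinearMap.coe_injective (LinearMap.ext_on huv ?_)
  rintro w (rfl | rfl)
  · change (3 * a ^ 2 - 4 * τ ^ 2) * L w = 0
    linear_combination 3 * a * h₁ + 2 * τ * h₂
  · change (3 * a ^ 2 - 4 * τ ^ 2) * L w = 0
    linear_combination a * h₂ + 2 * τ * h₁

theorem Polynomial.eval_derivative_X_pow_three_sub_C_mul_X {R : Type*} [CommRing R] (c s : R) :
    (X ^ 3 - C c * X : R[X]).derivative.eval s = 3 * s ^ 2 - c := by
  simp only [derivative_sub, derivative_X_pow, derivative_C_mul_X, eval_sub, eval_mul, eval_C,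
    eval_pow, eval_X]
  norm_num

theorem stmt5_general (τ : ℝ)
    (Ω : Set (ℝ × ℝ)) (hΩo : IsOpen Ω) (hΩc : IsConnected Ω)
    (lam : ℝ × ℝ → ℝ) (e₁ e₂ : ℝ × ℝ → ℝ × ℝ)
    (hlam : ∀ x ∈ Ω, DifferentiableAt ℝ lam x)
    (hframe : ∀ x ∈ Ω, Submodule.span ℝ {e₁ x, e₂ x} = ⊤)
    (h1 : ∀ x ∈ Ω, lam x * fderiv ℝ lam x (e₁ x) = 2 * τ * fderiv ℝ lam x (e₂ x))
    (h2 : ∀ x ∈ Ω, 3 * lam x * fderiv ℝ lam x (e₂ x) = 2 * τ * fderiv ℝ lam x (e₁ x)) :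
    ∀ x ∈ Ω, ∀ y ∈ Ω, lam x = lam y := by
  have hderiv : ∀ x ∈ Ω, HasFDerivAt (fun z ↦ (X ^ 3 - C (4 * τ ^ 2) * X : ℝ[X]).eval (lam z))
      (0 : ℝ × ℝ →L[ℝ] ℝ) x := by
    intro x hx
    have h := ((X ^ 3 - C (4 * τ ^ 2) * X : ℝ[X]).hasDerivAt (lam x)).comp_hasFDerivAt x
      (hlam x hx).hasFDerivAt
    rwa [eval_derivative_X_pow_three_sub_C_mul_X,
      (fderiv ℝ lam x).smul_eq_zero_of_frame_relations (hframe x hx) (h1 x hx) (h2 x hx)] at h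
  have hdeg : (X ^ 3 - C (4 * τ ^ 2) * X : ℝ[X]).natDegree = 3 := by compute_degree!
  obtain ⟨k, hk⟩ := hΩo.exists_is_const_of_fderiv_eq_zero hΩc.isPreconnected
    (fun x hx ↦ (hderiv x hx).differentiableAt.differentiableWithinAt)
    (fun x hx ↦ (hderiv x hx).fderiv)
  intro x hx y hy
  exact hΩc.isPreconnected.eq_of_eval_comp_eq
    (fun z hz ↦ (hlam z hz).continuousAt.continuousWithinAt) (by rw [hdeg]; norm_num) hk hx hy

/-- If `λ` is a differentiable function on a connected open domain of a surface,
satisfying `λ e₁(λ) = 2τ e₂(λ)` and `3λ e₂(λ) = 2τ e₁(λ)` with `τ ≠ 0`, where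
`{e₁, e₂}` is a frame (spanning the tangent plane at each point), then `λ` is constant. -/
theorem stmt5 (τ : ℝ) (hτ : τ ≠ 0)
    (Ω : Set (ℝ × ℝ)) (hΩo : IsOpen Ω) (hΩc : IsConnected Ω)
    (lam : ℝ × ℝ → ℝ) (e₁ e₂ : ℝ × ℝ → ℝ × ℝ)
    (hlam : ∀ x ∈ Ω, DifferentiableAt ℝ lam x)
    (hframe : ∀ x ∈ Ω, Submodule.span ℝ {e₁ x, e₂ x} = ⊤)
    (h1 : ∀ x ∈ Ω, lam x * fderiv ℝ lam x (e₁ x) = 2 * τ * fderiv ℝ lam x (e₂ x))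
    (h2 : ∀ x ∈ Ω, 3 * lam x * fderiv ℝ lam x (e₂ x) = 2 * τ * fderiv ℝ lam x (e₁ x)) :
    ∀ x ∈ Ω, ∀ y ∈ Ω, lam x = lam y :=
  stmt5_general τ Ω hΩo hΩc lam e₁ e₂ hlam hframe h1 h2
end
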